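/- arXiv:2202.08415 — 6 statements merged into one kernel-verified Lean document; each statement's English description precedes it below -/
import Mathlib

section
/- Let X be a convex subset of a real vector space and ≿ a complete, transitive binary relation on X. If ≿ is weakly Wold-continuous (order dense and weak Wold-solvable), then ≿ satisfies the Archimedean property: for all x, y, z ∈ X with x ≻ y, there exist λ, δ ∈ (0,1) such that λx + (1−λ)z ≻ y and x ≻ δy + (1−δ)z. -/
open Set

def StrictR {α : Type*} (R : α → α → Prop) (x y : α) : Prop := R x y ∧ ¬ R y x
def IndiffR {α : Type*} (R : α → α → Prop) (x y : α) : Prop := R x y ∧ R y x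

theorem stmt0 {V : Type*} [AddCommGroup V] [Module ℝ V] (X : Set V) (hX : Convex ℝ X)
    (R : V → V → Prop)
    (hcomp : ∀ ⦃x⦄, x ∈ X → ∀ ⦃y⦄, y ∈ X → R x y ∨ R y x)
    (htrans : ∀ ⦃x⦄, x ∈ X → ∀ ⦃y⦄, y ∈ X → ∀ ⦃z⦄, z ∈ X → R x y → R y z → R x z)
    (hdense : ∀ ⦃x⦄, x ∈ X → ∀ ⦃y⦄, y ∈ X → StrictR R x y →
      ∃ z ∈ X, StrictR R x z ∧ StrictR R z y)
    (hwws : ∀ ⦃x⦄, x ∈ X → ∀ ⦃y⦄, y ∈ X → ∀ ⦃z⦄, z ∈ X → StrictR R x z → StrictR R z y →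
      ∃ l ∈ Icc (0:ℝ) 1, IndiffR R (l • x + (1 - l) • y) z) :
    ∀ ⦃x⦄, x ∈ X → ∀ ⦃y⦄, y ∈ X → ∀ ⦃z⦄, z ∈ X → StrictR R x y →
      ∃ l ∈ Ioo (0:ℝ) 1, ∃ d ∈ Ioo (0:ℝ) 1,
        StrictR R (l • x + (1 - l) • z) y ∧ StrictR R x (d • y + (1 - d) • z) := by
  intro x hx y hy z hz hxy
  obtain ⟨w, hwX, hxw, hwy⟩ := hdense hx hy hxy
  have part1 : ∃ l ∈ Ioo (0:ℝ) 1, StrictR R (l • x + (1 - l) • z) y := by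
    set m : V := (1/2:ℝ) • x + (1/2:ℝ) • z with hm
    have hmX : m ∈ X := hX hx hz (by norm_num) (by norm_num) (by norm_num)
    by_cases hym : R y m
    · -- here x ≻ m and w ≻ m; use wws on segment [x, m]
      have hwm : StrictR R w m := ⟨htrans hwX hy hmX hwy.1 hym,
        fun h => hwy.2 (htrans hy hmX hwX hym h)⟩
      obtain ⟨l, hl, hp⟩ := hwws hx hmX hwX hxw hwm
      have hl0 : 0 < l := by
        rcases hl.1.lt_or_eq with h | h
        · exact h
        · exfalso; rw [← h] at hp; simp [IndiffR] at hp; exact hwm.2 hp.1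
      have hl1 : l < 1 := by
        rcases hl.2.eq_or_lt with h | h
        · exfalso; rw [h] at hp; simp [IndiffR] at hp; exact hxw.2 hp.2
        · exact h
      refine ⟨(1 + l) / 2, ⟨by linarith, by linarith⟩, ?_⟩
      have hpeq : ((1 + l) / 2) • x + (1 - (1 + l) / 2) • z = l • x + (1 - l) • m := by
        rw [hm]; module
      have hpX : l • x + (1 - l) • m ∈ X :=
        hX hx hmX (by linarith) (by linarith) (by ring)
      rw [hpeq]
      exact ⟨htrans hpX hwX hy hp.1 hwy.1,
        fun h => hwy.2 (htrans hy hpX hwX h hp.1)⟩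
    · have hmy : R m y := (hcomp hy hmX).resolve_left hym
      refine ⟨1/2, by norm_num, ?_⟩
      have h12 : (1:ℝ) - 1/2 = 1/2 := by norm_num
      rw [h12]
      exact ⟨hmy, hym⟩
  have part2 : ∃ d ∈ Ioo (0:ℝ) 1, StrictR R x (d • y + (1 - d) • z) := by
    set m : V := (1/2:ℝ) • y + (1/2:ℝ) • z with hm
    have hmX : m ∈ X := hX hy hz (by norm_num) (by norm_num) (by norm_num)
    by_cases hmx : R m x
    · -- here m ≻ y and m ≻ w; use wws on segment [m, y]
      have hmw : StrictR R m w := ⟨htrans hmX hx hwX hmx hxw.1,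
        fun h => hxw.2 (htrans hwX hmX hx h hmx)⟩
      obtain ⟨l, hl, hp⟩ := hwws hmX hy hwX hmw hwy
      have hl0 : 0 < l := by
        rcases hl.1.lt_or_eq with h | h
        · exact h
        · exfalso; rw [← h] at hp; simp [IndiffR] at hp; exact hwy.2 hp.1
      have hl1 : l < 1 := by
        rcases hl.2.eq_or_lt with h | h
        · exfalso; rw [h] at hp; simp [IndiffR] at hp; exact hmw.2 hp.2
        · exact h
      refine ⟨1 - l / 2, ⟨by linarith, by linarith⟩, ?_⟩
      have hpeq : (1 - l / 2) • y + (1 - (1 - l / 2)) • z = l • m + (1 - l) • y := by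
        rw [hm]; module
      have hpX : l • m + (1 - l) • y ∈ X :=
        hX hmX hy (by linarith) (by linarith) (by ring)
      rw [hpeq]
      exact ⟨htrans hx hwX hpX hxw.1 hp.2,
        fun h => hxw.2 (htrans hwX hpX hx hp.2 h)⟩
    · have hxm : R x m := (hcomp hmX hx).resolve_left hmx
      refine ⟨1/2, by norm_num, ?_⟩
      have h12 : (1:ℝ) - 1/2 = 1/2 := by norm_num
      rw [h12]
      exact ⟨hxm, hmx⟩
  obtain ⟨l, hl, h1⟩ := part1
  obtain ⟨d, hd, h2⟩ := part2
  exact ⟨l, hl, d, hd, h1, h2⟩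
end

section
/- Let I be an index set, X_i ⊆ ℝ nonempty for each i, and X a convex subset of the product ∏ X_i. If a complete, transitive binary relation ≿ on X is weakly Wold-continuous, then ≿ satisfies restricted solvability: for any x ∈ X, a_i, b_i ∈ X_i, y_{−i} with (a_i, y_{−i}), (b_i, y_{−i}) ∈ X and (a_i, y_{−i}) ≿ x ≿ (b_i, y_{−i}), there exists c_i such that (c_i, y_{−i}) ∈ X and x ∼ (c_i, y_{−i}). -/
open Set

theorem stmt1 {I : Type*} [DecidableEq I] (Xi : I → Set ℝ) (hXi : ∀ i, (Xi i).Nonempty)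
    (X : Set (I → ℝ)) (hXsub : X ⊆ Set.pi Set.univ Xi) (hX : Convex ℝ X)
    (R : (I → ℝ) → (I → ℝ) → Prop)
    (hcomp : ∀ ⦃x⦄, x ∈ X → ∀ ⦃y⦄, y ∈ X → R x y ∨ R y x)
    (htrans : ∀ ⦃x⦄, x ∈ X → ∀ ⦃y⦄, y ∈ X → ∀ ⦃z⦄, z ∈ X → R x y → R y z → R x z)
    (hdense : ∀ ⦃x⦄, x ∈ X → ∀ ⦃y⦄, y ∈ X → StrictR R x y →
      ∃ z ∈ X, StrictR R x z ∧ StrictR R z y)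
    (hwws : ∀ ⦃x⦄, x ∈ X → ∀ ⦃y⦄, y ∈ X → ∀ ⦃z⦄, z ∈ X → StrictR R x z → StrictR R z y →
      ∃ l ∈ Icc (0:ℝ) 1, IndiffR R (l • x + (1 - l) • y) z) :
    ∀ ⦃x⦄, x ∈ X → ∀ (i : I) (y : I → ℝ) (a b : ℝ), a ∈ Xi i → b ∈ Xi i →
      Function.update y i a ∈ X → Function.update y i b ∈ X →
      R (Function.update y i a) x → R x (Function.update y i b) →
      ∃ c, Function.update y i c ∈ X ∧ IndiffR R x (Function.update y i c) := by
  intro x hx i y a b ha hb hA hB hAx hxB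
  by_cases hxA : R x (Function.update y i a)
  · exact ⟨a, hA, hxA, hAx⟩
  by_cases hBx : R (Function.update y i b) x
  · exact ⟨b, hB, hxB, hBx⟩
  obtain ⟨l, ⟨hl0, hl1⟩, hind⟩ := hwws hA hB hx ⟨hAx, hxA⟩ ⟨hxB, hBx⟩
  have hmem : l • Function.update y i a + (1 - l) • Function.update y i b ∈ X :=
    hX hA hB hl0 (by linarith : (0:ℝ) ≤ 1 - l) (by ring)
  have heq : l • Function.update y i a + (1 - l) • Function.update y i b
      = Function.update y i (l * a + (1 - l) * b) := by
    funext j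
    by_cases hj : j = i
    · subst hj; simp
    · simp [Function.update_of_ne hj]; ring
  rw [heq] at hmem hind
  exact ⟨l * a + (1 - l) * b, hmem, hind.2, hind.1⟩
end

section
/- Let X be a convex subset of a product ∏_{i∈I} X_i with each X_i ⊆ ℝ, with the product topology. If a complete, transitive binary relation ≿ on X is mixture-continuous, then ≿ is separately continuous. -/
open Set

/-- The line through `x` parallel to the `i`-th coordinate axis, intersected with `X`. -/
def LineSet {I : Type*} (X : Set (I → ℝ)) (i : I) (x : I → ℝ) : Set (I → ℝ) :=
  {y ∈ X | ∀ j, j ≠ i → y j = x j}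

/-- Separate continuity of a relation on `X ⊆ ∏ᵢ Xᵢ` (product topology on `I → ℝ`). -/
def SepCont {I : Type*} (R : (I → ℝ) → (I → ℝ) → Prop) (X : Set (I → ℝ)) : Prop :=
  ∀ (i : I), ∀ ⦃x⦄, x ∈ X → ∀ ⦃z⦄, z ∈ X →
    IsClosed {p : LineSet X i x | R p.1 z} ∧ IsClosed {p : LineSet X i x | R z p.1} ∧
    IsOpen {p : LineSet X i x | StrictR R p.1 z} ∧ IsOpen {p : LineSet X i x | StrictR R z p.1}

lemma key_aux (P : ℝ → Prop) {t₀ s : ℝ} (hs : s ≠ t₀)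
    (hK : IsClosed {l : ℝ | l ∈ Icc (0:ℝ) 1 ∧ P (l * t₀ + (1 - l) * s)})
    (hcl : t₀ ∈ closure ({t | P t} ∩ uIcc t₀ s)) : P t₀ := by
  have hne : s - t₀ ≠ 0 := sub_ne_zero.mpr hs
  set φ : ℝ → ℝ := fun t => (s - t) / (s - t₀) with hφ
  have hcont : Continuous φ := by
    apply Continuous.div_const
    exact continuous_const.sub continuous_id
  have hmaps : Set.MapsTo φ ({t | P t} ∩ uIcc t₀ s)
      {l : ℝ | l ∈ Icc (0:ℝ) 1 ∧ P (l * t₀ + (1 - l) * s)} := by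
    rintro t ⟨hPt, htI⟩
    have heq : φ t * t₀ + (1 - φ t) * s = t := by
      simp only [hφ]
      field_simp
      ring
    refine ⟨?_, by rw [heq]; exact hPt⟩
    rcases hs.lt_or_gt with h | h
    · -- s < t₀
      rw [uIcc_of_ge h.le] at htI
      have h1 : φ t = (t - s) / (t₀ - s) := by
        simp only [hφ]
        rw [← neg_sub s t, ← neg_sub s t₀, neg_div_neg_eq]
      rw [h1]
      constructor
      · exact div_nonneg (by linarith [htI.1]) (by linarith)
      · rw [div_le_one (by linarith)]; linarith [htI.2]
    · -- t₀ < s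
      rw [uIcc_of_le h.le] at htI
      constructor
      · exact div_nonneg (by linarith [htI.2]) (by linarith)
      · rw [div_le_one (by linarith)]; linarith [htI.1]
  have h1 : φ t₀ = 1 := div_self hne
  have hmem : φ t₀ ∈ closure {l : ℝ | l ∈ Icc (0:ℝ) 1 ∧ P (l * t₀ + (1 - l) * s)} :=
    map_mem_closure hcont hcl hmaps
  rw [hK.closure_eq, h1] at hmem
  have := hmem.2
  simpa using this

lemma reach (P : ℝ → Prop) (D : Set ℝ) (t₀ : ℝ) (hDP : D ⊆ {t | P t})
    (hK : ∀ s ∈ D, IsClosed {l : ℝ | l ∈ Icc (0:ℝ) 1 ∧ P (l * t₀ + (1 - l) * s)})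
    (hcl : t₀ ∈ closure D) : P t₀ := by
  have hsplit : D = (D ∩ Ici t₀) ∪ (D ∩ Iic t₀) := by
    ext t
    simp only [mem_union, mem_inter_iff, mem_Ici, mem_Iic]
    constructor
    · intro h; exact (le_total t₀ t).imp (fun h' => ⟨h, h'⟩) (fun h' => ⟨h, h'⟩)
    · rintro (⟨h, _⟩ | ⟨h, _⟩) <;> exact h
  rw [hsplit, closure_union, mem_union] at hcl
  rcases hcl with hc | hc
  · -- approach from the right
    obtain ⟨s, hsD, hst⟩ := closure_nonempty_iff.mp ⟨t₀, hc⟩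
    have hst' : t₀ ≤ s := hst
    rcases eq_or_lt_of_le hst' with h | h
    · exact hDP (h ▸ hsD)
    · refine key_aux P h.ne' (hK s hsD) ?_
      have hstep : t₀ ∈ closure ((D ∩ Ici t₀) ∩ Iio s) := by
        rw [mem_closure_iff_nhds] at hc ⊢
        intro U hU
        obtain ⟨y, ⟨hy1, hy2⟩, hy3⟩ := hc (U ∩ Iio s) (Filter.inter_mem hU (Iio_mem_nhds h))
        exact ⟨y, hy1, hy3, hy2⟩
      refine closure_mono ?_ hstep
      rintro t ⟨⟨htD, ht1⟩, ht2⟩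
      exact ⟨hDP htD, by rw [uIcc_of_le h.le]; exact ⟨ht1, ht2.le⟩⟩
  · -- approach from the left
    obtain ⟨s, hsD, hst⟩ := closure_nonempty_iff.mp ⟨t₀, hc⟩
    have hst' : s ≤ t₀ := hst
    rcases eq_or_lt_of_le hst' with h | h
    · exact hDP (h ▸ hsD)
    · refine key_aux P h.ne (hK s hsD) ?_
      have hstep : t₀ ∈ closure ((D ∩ Iic t₀) ∩ Ioi s) := by
        rw [mem_closure_iff_nhds] at hc ⊢
        intro U hU
        obtain ⟨y, ⟨hy1, hy2⟩, hy3⟩ := hc (U ∩ Ioi s) (Filter.inter_mem hU (Ioi_mem_nhds h))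
        exact ⟨y, hy1, hy3, hy2⟩
      refine closure_mono ?_ hstep
      rintro t ⟨⟨htD, ht1⟩, ht2⟩
      exact ⟨hDP htD, by rw [uIcc_of_ge h.le]; exact ⟨ht2.le, ht1⟩⟩

theorem stmt6 {I : Type*} (Xi : I → Set ℝ) (hXi : ∀ i, (Xi i).Nonempty)
    (X : Set (I → ℝ)) (hXsub : X ⊆ Set.pi Set.univ Xi) (hX : Convex ℝ X)
    (R : (I → ℝ) → (I → ℝ) → Prop)
    (hcomp : ∀ ⦃x⦄, x ∈ X → ∀ ⦃y⦄, y ∈ X → R x y ∨ R y x)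
    (htrans : ∀ ⦃x⦄, x ∈ X → ∀ ⦃y⦄, y ∈ X → ∀ ⦃z⦄, z ∈ X → R x y → R y z → R x z)
    (hmix : ∀ ⦃x⦄, x ∈ X → ∀ ⦃y⦄, y ∈ X → ∀ ⦃z⦄, z ∈ X →
      IsClosed {l : ℝ | l ∈ Icc (0:ℝ) 1 ∧ R (l • x + (1 - l) • y) z} ∧
      IsClosed {l : ℝ | l ∈ Icc (0:ℝ) 1 ∧ R z (l • x + (1 - l) • y)}) :
    SepCont R X := by
  classical
  intro i x hx z hz
  set e : ℝ → (I → ℝ) := fun t => Function.update x i t with he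
  -- linearity of e on mixtures
  have hlin : ∀ (a b l : ℝ), e (l * a + (1 - l) * b) = l • e a + (1 - l) • e b := by
    intro a b l
    funext j
    by_cases h : j = i
    · subst h; simp [he]
    · simp [he, Function.update_of_ne h]
      ring
  -- every point of the line is of the form e t
  have hform : ∀ p : I → ℝ, p ∈ LineSet X i x → p = e (p i) := by
    intro p hp
    funext j
    by_cases h : j = i
    · subst h; simp [he]
    · simp [he, Function.update_of_ne h]
      exact hp.2 j h
  -- continuity of the coordinate map on the line
  have gcont : Continuous (fun q : LineSet X i x => (q : I → ℝ) i) :=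
    (continuous_apply i).comp continuous_subtype_val
  -- main closedness claim, stated for an arbitrary predicate coming from R
  have main : ∀ (Q : (I → ℝ) → Prop),
      (∀ ⦃a⦄, a ∈ X → ∀ ⦃b⦄, b ∈ X →
        IsClosed {l : ℝ | l ∈ Icc (0:ℝ) 1 ∧ Q (l • a + (1 - l) • b)}) →
      IsClosed {p : LineSet X i x | Q p.1} := by
    intro Q hQ
    apply isClosed_of_closure_subset
    intro p hp
    set t₀ : ℝ := (p : I → ℝ) i with ht₀
    have hpX : (p : I → ℝ) ∈ X := p.2.1
    have hpe : (p : I → ℝ) = e t₀ := hform _ p.2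
    set D : Set ℝ := {t | Q (e t) ∧ e t ∈ X} with hD
    have htmem : t₀ ∈ closure D := by
      have h1 : t₀ ∈ closure ((fun q : LineSet X i x => (q : I → ℝ) i) ''
          {p : LineSet X i x | Q p.1}) := by
        apply map_mem_closure gcont hp
        intro q _
        exact mem_image_of_mem _ ‹_›
      refine closure_mono ?_ h1
      rintro t ⟨q, hq, rfl⟩
      have hqe : (q : I → ℝ) = e ((q : I → ℝ) i) := hform _ q.2
      exact ⟨by rw [← hqe]; exact hq, by rw [← hqe]; exact q.2.1⟩
    have : Q (e t₀) := by
      apply reach (fun t => Q (e t)) D t₀ (fun t ht => ht.1) ?_ htmem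
      intro s hs
      have hsX : e s ∈ X := hs.2
      have heX : e t₀ ∈ X := hpe ▸ hpX
      have := hQ heX hsX
      convert this using 1
      ext l
      simp only [mem_setOf_eq]
      rw [hlin]
    rw [mem_setOf_eq, hpe]
    exact this
  have hC1 : IsClosed {p : LineSet X i x | R p.1 z} :=
    main (fun w => R w z) (fun a ha b hb => (hmix ha hb hz).1)
  have hC2 : IsClosed {p : LineSet X i x | R z p.1} :=
    main (fun w => R z w) (fun a ha b hb => (hmix ha hb hz).2)
  refine ⟨hC1, hC2, ?_, ?_⟩
  · have hset : {p : LineSet X i x | StrictR R p.1 z} = {p : LineSet X i x | R z p.1}ᶜ := by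
      ext q
      simp only [mem_setOf_eq, mem_compl_iff, StrictR]
      constructor
      · rintro ⟨_, h2⟩; exact h2
      · intro h; exact ⟨(hcomp q.2.1 hz).resolve_right h, h⟩
    rw [hset]
    exact hC2.isOpen_compl
  · have hset : {p : LineSet X i x | StrictR R z p.1} = {p : LineSet X i x | R p.1 z}ᶜ := by
      ext q
      simp only [mem_setOf_eq, mem_compl_iff, StrictR]
      constructor
      · rintro ⟨_, h2⟩; exact h2
      · intro h; exact ⟨(hcomp hz q.2.1).resolve_right h, h⟩
    rw [hset]
    exact hC1.isOpen_compl
end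

section
/- Let ≿ be a transitive binary relation on a convex, order-bounded subset X of ℝ² that is weakly monotone in its first coordinate. If ≿ is separately continuous on X, then ≿ is continuous on the interior of X. -/
open Set

open Filter Function Topology

section Helpers


variable {X : Set (Fin 2 → ℝ)} {R : (Fin 2 → ℝ) → (Fin 2 → ℝ) → Prop}

lemma self_mem_lineSet {i : Fin 2} {w : Fin 2 → ℝ} (hw : w ∈ X) : w ∈ LineSet X i w :=
  ⟨hw, fun _ _ => rfl⟩

lemma update_mem_lineSet {i : Fin 2} {w : Fin 2 → ℝ} {t : ℝ} (h : Function.update w i t ∈ X) :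
    Function.update w i t ∈ LineSet X i w :=
  ⟨h, fun j hj => Function.update_of_ne hj _ _⟩

lemma tendsto_update {i : Fin 2} {w : Fin 2 → ℝ} {f : ℕ → ℝ} (hf : Tendsto f atTop (𝓝 (w i))) :
    Tendsto (fun n => Function.update w i (f n)) atTop (𝓝 w) := by
  rw [tendsto_pi_nhds]
  intro j
  by_cases hj : j = i
  · subst hj; simpa using hf
  · simpa [Function.update_of_ne hj] using (tendsto_const_nhds : Tendsto (fun _ : ℕ => w j) atTop (𝓝 (w j)))

lemma line_closed_left (hsep : SepCont R X) {w z : Fin 2 → ℝ} (hw : w ∈ X) (hz : z ∈ X)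
    (i : Fin 2) {f : ℕ → ℝ} (hf : Tendsto f atTop (𝓝 (w i)))
    (hmem : ∀ n, Function.update w i (f n) ∈ X)
    (hR : ∀ n, R (Function.update w i (f n)) z) : R w z := by
  have hcl := ((hsep i hw hz).1).isSeqClosed
  exact hcl (x := fun n => (⟨_, update_mem_lineSet (hmem n)⟩ : LineSet X i w))
    (p := ⟨w, self_mem_lineSet hw⟩) (fun n => hR n)
    (tendsto_subtype_rng.2 (tendsto_update hf))

lemma line_closed_right (hsep : SepCont R X) {w z : Fin 2 → ℝ} (hw : w ∈ X) (hz : z ∈ X)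
    (i : Fin 2) {f : ℕ → ℝ} (hf : Tendsto f atTop (𝓝 (w i)))
    (hmem : ∀ n, Function.update w i (f n) ∈ X)
    (hR : ∀ n, R z (Function.update w i (f n))) : R z w := by
  have hcl := ((hsep i hw hz).2.1).isSeqClosed
  exact hcl (x := fun n => (⟨_, update_mem_lineSet (hmem n)⟩ : LineSet X i w))
    (p := ⟨w, self_mem_lineSet hw⟩) (fun n => hR n)
    (tendsto_subtype_rng.2 (tendsto_update hf))


lemma line_open_left (hsep : SepCont R X) {w z : Fin 2 → ℝ} (hw : w ∈ X) (hz : z ∈ X)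
    (i : Fin 2) (h : StrictR R w z) :
    ∃ ε > 0, ∀ t, |t - w i| < ε → Function.update w i t ∈ X →
      StrictR R (Function.update w i t) z := by
  have hop := (hsep i hw hz).2.2.1
  have ha : (⟨w, self_mem_lineSet hw⟩ : LineSet X i w) ∈
      {p : LineSet X i w | StrictR R p.1 z} := h
  have hmem := hop.mem_nhds ha
  rw [nhds_subtype_eq_comap, Filter.mem_comap] at hmem
  obtain ⟨T, hT, hsub⟩ := hmem
  obtain ⟨ε, hε, hball⟩ := Metric.mem_nhds_iff.1 hT
  refine ⟨ε, hε, fun t ht hX' => ?_⟩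
  have hballmem : Function.update w i t ∈ Metric.ball w ε := by
    rw [Metric.mem_ball, dist_pi_lt_iff hε]
    intro j
    by_cases hj : j = i
    · subst hj; simpa [Real.dist_eq] using ht
    · simpa [Function.update_of_ne hj] using hε
  exact hsub (show (⟨_, update_mem_lineSet hX'⟩ : LineSet X i w) ∈ Subtype.val ⁻¹' T
    from hball hballmem)

lemma line_open_right (hsep : SepCont R X) {w z : Fin 2 → ℝ} (hw : w ∈ X) (hz : z ∈ X)
    (i : Fin 2) (h : StrictR R z w) :
    ∃ ε > 0, ∀ t, |t - w i| < ε → Function.update w i t ∈ X →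
      StrictR R z (Function.update w i t) := by
  have hop := (hsep i hw hz).2.2.2
  have ha : (⟨w, self_mem_lineSet hw⟩ : LineSet X i w) ∈
      {p : LineSet X i w | StrictR R z p.1} := h
  have hmem := hop.mem_nhds ha
  rw [nhds_subtype_eq_comap, Filter.mem_comap] at hmem
  obtain ⟨T, hT, hsub⟩ := hmem
  obtain ⟨ε, hε, hball⟩ := Metric.mem_nhds_iff.1 hT
  refine ⟨ε, hε, fun t ht hX' => ?_⟩
  have hballmem : Function.update w i t ∈ Metric.ball w ε := by
    rw [Metric.mem_ball, dist_pi_lt_iff hε]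
    intro j
    by_cases hj : j = i
    · subst hj; simpa [Real.dist_eq] using ht
    · simpa [Function.update_of_ne hj] using hε
  exact hsub (show (⟨_, update_mem_lineSet hX'⟩ : LineSet X i w) ∈ Subtype.val ⁻¹' T
    from hball hballmem)

lemma mem_ball_of_coords {p q : Fin 2 → ℝ} {ε : ℝ} (hε : 0 < ε)
    (h0 : |q 0 - p 0| < ε) (h1 : |q 1 - p 1| < ε) : q ∈ Metric.ball p ε := by
  rw [Metric.mem_ball, dist_pi_lt_iff hε]
  intro j
  fin_cases j <;> simpa [Real.dist_eq]


end Helpers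

theorem stmt7 (X : Set (Fin 2 → ℝ)) (hX : Convex ℝ X)
    (hbdd : ∀ ⦃x⦄, x ∈ X → ∀ ⦃y⦄, y ∈ X →
      ∃ a ∈ X, ∃ b ∈ X, x ≤ a ∧ y ≤ a ∧ b ≤ x ∧ b ≤ y)
    (R : (Fin 2 → ℝ) → (Fin 2 → ℝ) → Prop)
    (htrans : ∀ ⦃x⦄, x ∈ X → ∀ ⦃y⦄, y ∈ X → ∀ ⦃z⦄, z ∈ X → R x y → R y z → R x z)
    (hmono1 : ∀ ⦃x⦄, x ∈ X → ∀ ⦃y⦄, y ∈ X → y 0 < x 0 → x 1 = y 1 → R x y)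
    (hsep : SepCont R X) :
    ∀ ⦃z⦄, z ∈ X →
      IsClosed {p : interior X | R p.1 z} ∧ IsClosed {p : interior X | R z p.1} ∧
      IsOpen {p : interior X | StrictR R p.1 z} ∧ IsOpen {p : interior X | StrictR R z p.1} := by
  intro z hz
  refine ⟨?_, ?_, ?_, ?_⟩
  · -- R · z closed
    apply IsSeqClosed.isClosed
    intro u p hu hup
    have hpX : p.1 ∈ X := interior_subset p.2
    have huX : ∀ n, (u n).1 ∈ X := fun n => interior_subset (u n).2
    have hvals : Tendsto (fun n => (u n).1) atTop (𝓝 p.1) := tendsto_subtype_rng.1 hup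
    have h0 : Tendsto (fun n => (u n).1 0) atTop (𝓝 (p.1 0)) := (tendsto_pi_nhds.1 hvals) 0
    have h1 : Tendsto (fun n => (u n).1 1) atTop (𝓝 (p.1 1)) := (tendsto_pi_nhds.1 hvals) 1
    obtain ⟨ε, hε, hball⟩ := Metric.mem_nhds_iff.1 (mem_interior_iff_mem_nhds.1 p.2)
    have claim : ∀ t, p.1 0 < t → t < p.1 0 + ε → R (Function.update p.1 0 t) z := by
      intro t ht htε
      set w := Function.update p.1 0 t with hwdef
      have hw0 : w 0 = t := Function.update_self _ _ _
      have hw1 : w 1 = p.1 1 := Function.update_of_ne (by decide) _ _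
      have hwX : w ∈ X := hball (mem_ball_of_coords hε
        (by rw [hw0]; rw [abs_lt]; constructor <;> linarith)
        (by rw [hw1]; simpa using hε))
      have E0 : ∀ᶠ n in atTop, dist ((u n).1 0) (p.1 0) < t - p.1 0 :=
        Metric.tendsto_nhds.1 h0 _ (by linarith)
      have E1 : ∀ᶠ n in atTop, dist ((u n).1 1) (p.1 1) < ε :=
        Metric.tendsto_nhds.1 h1 ε hε
      obtain ⟨N, hN⟩ := Filter.eventually_atTop.1 (E0.and E1)
      have hf : Tendsto (fun n => (u (n + N)).1 1) atTop (𝓝 (w 1)) := by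
        rw [hw1]; exact h1.comp (tendsto_add_atTop_nat N)
      have hmem : ∀ n, Function.update w 1 ((u (n + N)).1 1) ∈ X := by
        intro n
        refine hball (mem_ball_of_coords hε ?_ ?_)
        · rw [Function.update_of_ne (by decide) _ _, hw0, abs_lt]
          constructor <;> linarith
        · rw [Function.update_self]
          simpa [Real.dist_eq] using (hN (n + N) (Nat.le_add_left N n)).2
      have hR : ∀ n, R (Function.update w 1 ((u (n + N)).1 1)) z := by
        intro n
        have hd := (hN (n + N) (Nat.le_add_left N n)).1
        rw [Real.dist_eq, abs_lt] at hd
        have hm : R (Function.update w 1 ((u (n + N)).1 1)) (u (n + N)).1 := by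
          refine hmono1 (hmem n) (huX _) ?_ ?_
          · rw [Function.update_of_ne (by decide) _ _, hw0]; linarith
          · rw [Function.update_self]
        exact htrans (hmem n) (huX _) hz hm (hu (n + N))
      exact line_closed_left hsep hwX hz 1 hf hmem hR
    obtain ⟨f, -, hfmem, hftend⟩ :=
      exists_seq_strictAnti_tendsto' (show p.1 0 < p.1 0 + ε by linarith)
    refine line_closed_left hsep hpX hz 0 hftend (fun n => ?_) (fun n => ?_)
    · obtain ⟨hl, hr⟩ := hfmem n
      exact hball (mem_ball_of_coords hε
        (by rw [Function.update_self, abs_lt]; constructor <;> linarith)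
        (by rw [Function.update_of_ne (by decide)]; simpa using hε))
    · exact claim (f n) (hfmem n).1 (hfmem n).2
  · -- R z · closed
    apply IsSeqClosed.isClosed
    intro u p hu hup
    have hpX : p.1 ∈ X := interior_subset p.2
    have huX : ∀ n, (u n).1 ∈ X := fun n => interior_subset (u n).2
    have hvals : Tendsto (fun n => (u n).1) atTop (𝓝 p.1) := tendsto_subtype_rng.1 hup
    have h0 : Tendsto (fun n => (u n).1 0) atTop (𝓝 (p.1 0)) := (tendsto_pi_nhds.1 hvals) 0
    have h1 : Tendsto (fun n => (u n).1 1) atTop (𝓝 (p.1 1)) := (tendsto_pi_nhds.1 hvals) 1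
    obtain ⟨ε, hε, hball⟩ := Metric.mem_nhds_iff.1 (mem_interior_iff_mem_nhds.1 p.2)
    have claim : ∀ t, p.1 0 - ε < t → t < p.1 0 → R z (Function.update p.1 0 t) := by
      intro t ht htε
      set w := Function.update p.1 0 t with hwdef
      have hw0 : w 0 = t := Function.update_self _ _ _
      have hw1 : w 1 = p.1 1 := Function.update_of_ne (by decide) _ _
      have hwX : w ∈ X := hball (mem_ball_of_coords hε
        (by rw [hw0]; rw [abs_lt]; constructor <;> linarith)
        (by rw [hw1]; simpa using hε))
      have E0 : ∀ᶠ n in atTop, dist ((u n).1 0) (p.1 0) < p.1 0 - t :=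
        Metric.tendsto_nhds.1 h0 _ (by linarith)
      have E1 : ∀ᶠ n in atTop, dist ((u n).1 1) (p.1 1) < ε :=
        Metric.tendsto_nhds.1 h1 ε hε
      obtain ⟨N, hN⟩ := Filter.eventually_atTop.1 (E0.and E1)
      have hf : Tendsto (fun n => (u (n + N)).1 1) atTop (𝓝 (w 1)) := by
        rw [hw1]; exact h1.comp (tendsto_add_atTop_nat N)
      have hmem : ∀ n, Function.update w 1 ((u (n + N)).1 1) ∈ X := by
        intro n
        refine hball (mem_ball_of_coords hε ?_ ?_)
        · rw [Function.update_of_ne (by decide) _ _, hw0, abs_lt]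
          constructor <;> linarith
        · rw [Function.update_self]
          simpa [Real.dist_eq] using (hN (n + N) (Nat.le_add_left N n)).2
      have hR : ∀ n, R z (Function.update w 1 ((u (n + N)).1 1)) := by
        intro n
        have hd := (hN (n + N) (Nat.le_add_left N n)).1
        rw [Real.dist_eq, abs_lt] at hd
        have hm : R (u (n + N)).1 (Function.update w 1 ((u (n + N)).1 1)) := by
          refine hmono1 (huX _) (hmem n) ?_ ?_
          · rw [Function.update_of_ne (by decide) _ _, hw0]; linarith
          · rw [Function.update_self]
        exact htrans hz (huX _) (hmem n) (hu (n + N)) hm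
      exact line_closed_right hsep hwX hz 1 hf hmem hR
    obtain ⟨f, -, hfmem, hftend⟩ :=
      exists_seq_strictMono_tendsto' (show p.1 0 - ε < p.1 0 by linarith)
    refine line_closed_right hsep hpX hz 0 hftend (fun n => ?_) (fun n => ?_)
    · obtain ⟨hl, hr⟩ := hfmem n
      exact hball (mem_ball_of_coords hε
        (by rw [Function.update_self, abs_lt]; constructor <;> linarith)
        (by rw [Function.update_of_ne (by decide)]; simpa using hε))
    · exact claim (f n) (hfmem n).1 (hfmem n).2
  · -- StrictR · z open
    rw [isOpen_iff_mem_nhds]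
    rintro ⟨p, hp⟩ hstrict
    have hpX : p ∈ X := interior_subset hp
    obtain ⟨ε, hε, hball⟩ := Metric.mem_nhds_iff.1 (mem_interior_iff_mem_nhds.1 hp)
    obtain ⟨ε₁, hε₁, H1⟩ := line_open_left hsep hpX hz 0 hstrict
    set δ := min ε ε₁ / 2 with hδdef
    have hδ0 : 0 < δ := by positivity
    have hδε : δ < ε := by
      have := min_le_left ε ε₁; rw [hδdef]; linarith
    have hδε₁ : δ < ε₁ := by
      have := min_le_right ε ε₁; rw [hδdef]; linarith
    set pm := Function.update p 0 (p 0 - δ) with hpmdef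
    have hpm0 : pm 0 = p 0 - δ := Function.update_self _ _ _
    have hpm1 : pm 1 = p 1 := Function.update_of_ne (by decide) _ _
    have hpmX : pm ∈ X := hball (mem_ball_of_coords hε
      (by rw [hpm0, abs_lt]; constructor <;> linarith)
      (by rw [hpm1]; simpa using hε))
    have hpmS : StrictR R pm z := H1 _ (by rw [abs_lt]; constructor <;> linarith) hpmX
    obtain ⟨ε₂, hε₂, H2⟩ := line_open_left hsep hpmX hz 1 hpmS
    rw [nhds_subtype_eq_comap, Filter.mem_comap]
    refine ⟨{q : Fin 2 → ℝ | p 0 - δ < q 0} ∩ (fun q : Fin 2 → ℝ => q 1) ⁻¹'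
      Metric.ball (p 1) (min ε₂ ε), ?_, ?_⟩
    · refine IsOpen.mem_nhds ?_ ?_
      · exact (isOpen_lt continuous_const (continuous_apply 0)).inter
          (Metric.isOpen_ball.preimage (continuous_apply 1))
      · exact ⟨by simpa using hδ0, by simp [Metric.mem_ball, hε₂, hε]⟩
    · rintro ⟨q, hq⟩ ⟨hq0, hq1⟩
      have hqX : q ∈ X := interior_subset hq
      have hq1' : |q 1 - p 1| < min ε₂ ε := by simpa [Real.dist_eq] using hq1
      set v := Function.update pm 1 (q 1) with hvdef
      have hv0 : v 0 = p 0 - δ := by rw [hvdef, Function.update_of_ne (by decide), hpm0]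
      have hv1 : v 1 = q 1 := Function.update_self _ _ _
      have hvX : v ∈ X := hball (mem_ball_of_coords hε
        (by rw [hv0, abs_lt]; constructor <;> linarith)
        (by rw [hv1]; exact lt_of_lt_of_le hq1' (min_le_right _ _)))
      have hvS : StrictR R v z := H2 (q 1)
        (by rw [hpm1]; exact lt_of_lt_of_le hq1' (min_le_left _ _)) hvX
      have hqv : R q v := hmono1 hqX hvX (by rw [hv0]; exact hq0) hv1.symm
      exact ⟨htrans hqX hvX hz hqv hvS.1, fun hzq => hvS.2 (htrans hz hqX hvX hzq hqv)⟩
  · -- StrictR z · open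
    rw [isOpen_iff_mem_nhds]
    rintro ⟨p, hp⟩ hstrict
    have hpX : p ∈ X := interior_subset hp
    obtain ⟨ε, hε, hball⟩ := Metric.mem_nhds_iff.1 (mem_interior_iff_mem_nhds.1 hp)
    obtain ⟨ε₁, hε₁, H1⟩ := line_open_right hsep hpX hz 0 hstrict
    set δ := min ε ε₁ / 2 with hδdef
    have hδ0 : 0 < δ := by positivity
    have hδε : δ < ε := by
      have := min_le_left ε ε₁; rw [hδdef]; linarith
    have hδε₁ : δ < ε₁ := by
      have := min_le_right ε ε₁; rw [hδdef]; linarith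
    set pp := Function.update p 0 (p 0 + δ) with hppdef
    have hpp0 : pp 0 = p 0 + δ := Function.update_self _ _ _
    have hpp1 : pp 1 = p 1 := Function.update_of_ne (by decide) _ _
    have hppX : pp ∈ X := hball (mem_ball_of_coords hε
      (by rw [hpp0, abs_lt]; constructor <;> linarith)
      (by rw [hpp1]; simpa using hε))
    have hppS : StrictR R z pp := H1 _ (by rw [abs_lt]; constructor <;> linarith) hppX
    obtain ⟨ε₂, hε₂, H2⟩ := line_open_right hsep hppX hz 1 hppS
    rw [nhds_subtype_eq_comap, Filter.mem_comap]
    refine ⟨{q : Fin 2 → ℝ | q 0 < p 0 + δ} ∩ (fun q : Fin 2 → ℝ => q 1) ⁻¹'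
      Metric.ball (p 1) (min ε₂ ε), ?_, ?_⟩
    · refine IsOpen.mem_nhds ?_ ?_
      · exact (isOpen_lt (continuous_apply 0) continuous_const).inter
          (Metric.isOpen_ball.preimage (continuous_apply 1))
      · exact ⟨by simpa using hδ0, by simp [Metric.mem_ball, hε₂, hε]⟩
    · rintro ⟨q, hq⟩ ⟨hq0, hq1⟩
      have hqX : q ∈ X := interior_subset hq
      have hq1' : |q 1 - p 1| < min ε₂ ε := by simpa [Real.dist_eq] using hq1
      set v := Function.update pp 1 (q 1) with hvdef
      have hv0 : v 0 = p 0 + δ := by rw [hvdef, Function.update_of_ne (by decide), hpp0]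
      have hv1 : v 1 = q 1 := Function.update_self _ _ _
      have hvX : v ∈ X := hball (mem_ball_of_coords hε
        (by rw [hv0, abs_lt]; constructor <;> linarith)
        (by rw [hv1]; exact lt_of_lt_of_le hq1' (min_le_right _ _)))
      have hvS : StrictR R z v := H2 (q 1)
        (by rw [hpp1]; exact lt_of_lt_of_le hq1' (min_le_left _ _)) hvX
      have hvq : R v q := hmono1 hvX hqX (by rw [hv0]; exact hq0) hv1
      exact ⟨htrans hz hvX hqX hvS.1 hvq, fun hqz => hvS.2 (htrans hvX hqX hz hvq hqz)⟩
end

section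
/- Let ≿ be a complete, transitive, order dense, weakly monotonic binary relation on a convex order-bounded set X ⊆ ℝⁿ. If ≿ satisfies restricted solvability, then ≿ is separately continuous. -/
open Set

/-- An upward-closed subset `U` of `L ⊆ ℝ` which, below any point of `L \ U`
(whenever `U` is nonempty), has another point of `L \ U` strictly above it,
is relatively closed: its closure meets `L` only in `U`. -/
lemma upAux {L U : Set ℝ} (hup : ∀ u ∈ U, ∀ t ∈ L, u ≤ t → t ∈ U)
    (hP : ∀ c ∈ L, c ∉ U → ∀ t, t ∈ U → ∃ c'', c'' ∈ L ∧ c'' ∉ U ∧ c < c'') :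
    closure U ∩ L ⊆ U := by
  rintro c ⟨hc, hcL⟩
  by_contra hcU
  obtain ⟨t, ht⟩ : U.Nonempty := by
    rcases U.eq_empty_or_nonempty with h | h
    · rw [h, closure_empty] at hc; exact hc.elim
    · exact h
  obtain ⟨c'', hc''L, hc''U, hlt⟩ := hP c hcL hcU t ht
  have hsub : U ⊆ Set.Ici c'' := by
    intro u hu
    by_contra h
    exact hc''U (hup u hu c'' hc''L (le_of_not_ge fun h' => h h'))
  have : c ∈ Set.Ici c'' := isClosed_Ici.closure_subset_iff.mpr hsub hc
  exact absurd this (not_le.mpr hlt)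

lemma downAux {L D : Set ℝ} (hdown : ∀ d ∈ D, ∀ t ∈ L, t ≤ d → t ∈ D)
    (hP : ∀ c ∈ L, c ∉ D → ∀ t, t ∈ D → ∃ c'', c'' ∈ L ∧ c'' ∉ D ∧ c'' < c) :
    closure D ∩ L ⊆ D := by
  rintro c ⟨hc, hcL⟩
  by_contra hcD
  obtain ⟨t, ht⟩ : D.Nonempty := by
    rcases D.eq_empty_or_nonempty with h | h
    · rw [h, closure_empty] at hc; exact hc.elim
    · exact h
  obtain ⟨c'', hc''L, hc''D, hlt⟩ := hP c hcL hcD t ht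
  have hsub : D ⊆ Set.Iic c'' := by
    intro d hd
    by_contra h
    exact hc''D (hdown d hd c'' hc''L (le_of_not_ge fun h' => h h'))
  have : c ∈ Set.Iic c'' := isClosed_Iic.closure_subset_iff.mpr hsub hc
  exact absurd this (not_le.mpr hlt)

theorem stmt9 {n : ℕ} (X : Set (Fin n → ℝ)) (hX : Convex ℝ X)
    (hbdd : ∀ ⦃x⦄, x ∈ X → ∀ ⦃y⦄, y ∈ X →
      ∃ a ∈ X, ∃ b ∈ X, x ≤ a ∧ y ≤ a ∧ b ≤ x ∧ b ≤ y)
    (R : (Fin n → ℝ) → (Fin n → ℝ) → Prop)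
    (hcomp : ∀ ⦃x⦄, x ∈ X → ∀ ⦃y⦄, y ∈ X → R x y ∨ R y x)
    (htrans : ∀ ⦃x⦄, x ∈ X → ∀ ⦃y⦄, y ∈ X → ∀ ⦃z⦄, z ∈ X → R x y → R y z → R x z)
    (hdense : ∀ ⦃x⦄, x ∈ X → ∀ ⦃y⦄, y ∈ X → StrictR R x y →
      ∃ z ∈ X, StrictR R x z ∧ StrictR R z y)
    (hmono : ∀ ⦃x⦄, x ∈ X → ∀ ⦃y⦄, y ∈ X → y < x → R x y)
    (hrs : ∀ ⦃x⦄, x ∈ X → ∀ (i : Fin n) (y : Fin n → ℝ) (a b : ℝ),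
      Function.update y i a ∈ X → Function.update y i b ∈ X →
      R (Function.update y i a) x → R x (Function.update y i b) →
      ∃ c, Function.update y i c ∈ X ∧ IndiffR R x (Function.update y i c)) :
    SepCont R X := by
  intro i x hx z hz
  set f : ℝ → (Fin n → ℝ) := Function.update x i with hf
  -- basic facts about f
  have hflt : ∀ {s t : ℝ}, s < t → f s < f t := by
    intro s t hst
    refine lt_of_le_of_ne (fun j => ?_) (fun h => ?_)
    · by_cases hj : j = i
      · subst hj; simp [hf, Function.update_self]; exact hst.le
      · simp [hf, Function.update_of_ne hj]
    · have := congrFun h i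
      simp [hf, Function.update_self] at this
      exact hst.ne this
  have hRmono : ∀ s t : ℝ, f s ∈ X → f t ∈ X → s ≤ t → R (f t) (f s) := by
    intro s t hs ht hst
    rcases hst.lt_or_eq with h | h
    · exact hmono ht hs (hflt h)
    · subst h; exact (hcomp hs hs).elim id id
  -- representation of points on the line
  have hrep : ∀ p : Fin n → ℝ, p ∈ LineSet X i x → p = f (p i) := by
    intro p hp
    funext j
    by_cases hj : j = i
    · subst hj; simp [hf, Function.update_self]
    · simp [hf, Function.update_of_ne hj]
      exact (hp.2 j hj)
  have hpX : ∀ p : Fin n → ℝ, p ∈ LineSet X i x → p ∈ X := fun p hp => hp.1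
  have hgcont : Continuous (fun p : LineSet X i x => p.1 i) :=
    (continuous_apply i).comp continuous_subtype_val
  -- the parametrized line, upper and lower sections
  set L : Set ℝ := {t | f t ∈ X} with hL
  set U : Set ℝ := {t | f t ∈ X ∧ R (f t) z} with hU
  set D : Set ℝ := {t | f t ∈ X ∧ R z (f t)} with hD
  have hup : ∀ u ∈ U, ∀ t ∈ L, u ≤ t → t ∈ U := by
    intro u hu t ht hle
    exact ⟨ht, htrans ht hu.1 hz (hRmono u t hu.1 ht hle) hu.2⟩
  have hdown : ∀ d ∈ D, ∀ t ∈ L, t ≤ d → t ∈ D := by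
    intro d hd t ht hle
    exact ⟨ht, htrans hz hd.1 ht hd.2 (hRmono t d ht hd.1 hle)⟩
  -- the gap property for U
  have hPU : ∀ c ∈ L, c ∉ U → ∀ t, t ∈ U → ∃ c'', c'' ∈ L ∧ c'' ∉ U ∧ c < c'' := by
    intro c hcL hcU t ht
    have hc : f c ∈ X := hcL
    have hcz : ¬ R (f c) z := fun h => hcU ⟨hc, h⟩
    have hzc : R z (f c) := (hcomp hc hz).resolve_left hcz
    obtain ⟨c', hc'X, hc'⟩ := hrs hz i x t c ht.1 hc ht.2 hzc
    obtain ⟨w, hw, hzw, hwc⟩ := hdense hz hc ⟨hzc, hcz⟩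
    have hc'w : R (f c') w := htrans hc'X hz hw hc'.2 hzw.1
    obtain ⟨c'', hc''X, hwcc⟩ := hrs hw i x c' c hc'X hc hc'w hwc.1
    refine ⟨c'', hc''X, ?_, ?_⟩
    · rintro ⟨-, hcz''⟩
      exact hzw.2 (htrans hw hc''X hz hwcc.1 hcz'')
    · by_contra h
      push_neg at h
      exact hwc.2 (htrans hc hc''X hw (hRmono c'' c hc''X hc h) hwcc.2)
  -- the gap property for D
  have hPD : ∀ c ∈ L, c ∉ D → ∀ t, t ∈ D → ∃ c'', c'' ∈ L ∧ c'' ∉ D ∧ c'' < c := by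
    intro c hcL hcD t ht
    have hc : f c ∈ X := hcL
    have hzc : ¬ R z (f c) := fun h => hcD ⟨hc, h⟩
    have hcz : R (f c) z := (hcomp hc hz).resolve_right hzc
    obtain ⟨c', hc'X, hc'⟩ := hrs hz i x c t hc ht.1 hcz ht.2
    obtain ⟨w, hw, hcw, hwz⟩ := hdense hc hz ⟨hcz, hzc⟩
    have hwc' : R w (f c') := htrans hw hz hc'X hwz.1 hc'.1
    obtain ⟨c'', hc''X, hwcc⟩ := hrs hw i x c c' hc hc'X hcw.1 hwc'
    refine ⟨c'', hc''X, ?_, ?_⟩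
    · rintro ⟨-, hzc''⟩
      exact hwz.2 (htrans hz hc''X hw hzc'' hwcc.2)
    · by_contra h
      push_neg at h
      exact hcw.2 (htrans hw hc''X hc hwcc.1 (hRmono c c'' hc hc''X h))
  have hUcl : closure U ∩ L ⊆ U := upAux hup hPU
  have hDcl : closure D ∩ L ⊆ D := downAux hdown hPD
  -- closedness of the two weak sections
  have hc1 : IsClosed {p : LineSet X i x | R p.1 z} := by
    have heq : {p : LineSet X i x | R p.1 z} =
        (fun p : LineSet X i x => p.1 i) ⁻¹' (closure U) := by
      ext p
      have hpr := hrep p.1 p.2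
      have hpx : p.1 ∈ X := hpX p.1 p.2
      simp only [mem_setOf_eq, mem_preimage]
      constructor
      · intro h
        exact subset_closure ⟨hpr ▸ hpx, hpr ▸ h⟩
      · intro h
        have hin : p.1 i ∈ U := hUcl ⟨h, show f (p.1 i) ∈ X from hpr ▸ hpx⟩
        exact hpr ▸ hin.2
    rw [heq]
    exact isClosed_closure.preimage hgcont
  have hc2 : IsClosed {p : LineSet X i x | R z p.1} := by
    have heq : {p : LineSet X i x | R z p.1} =
        (fun p : LineSet X i x => p.1 i) ⁻¹' (closure D) := by
      ext p
      have hpr := hrep p.1 p.2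
      have hpx : p.1 ∈ X := hpX p.1 p.2
      simp only [mem_setOf_eq, mem_preimage]
      constructor
      · intro h
        exact subset_closure ⟨hpr ▸ hpx, hpr ▸ h⟩
      · intro h
        have hin : p.1 i ∈ D := hDcl ⟨h, show f (p.1 i) ∈ X from hpr ▸ hpx⟩
        exact hpr ▸ hin.2
    rw [heq]
    exact isClosed_closure.preimage hgcont
  refine ⟨hc1, hc2, ?_, ?_⟩
  · have heq : {p : LineSet X i x | StrictR R p.1 z} = {p : LineSet X i x | R z p.1}ᶜ := by
      ext p
      have hpx : p.1 ∈ X := hpX p.1 p.2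
      simp only [mem_setOf_eq, mem_compl_iff]
      constructor
      · exact fun h => h.2
      · exact fun h => ⟨(hcomp hpx hz).resolve_right h, h⟩
    rw [heq]
    exact hc2.isOpen_compl
  · have heq : {p : LineSet X i x | StrictR R z p.1} = {p : LineSet X i x | R p.1 z}ᶜ := by
      ext p
      have hpx : p.1 ∈ X := hpX p.1 p.2
      simp only [mem_setOf_eq, mem_compl_iff]
      constructor
      · exact fun h => h.2
      · exact fun h => ⟨(hcomp hz hpx).resolve_right h, h⟩
    rw [heq]
    exact hc1.isOpen_compl
end

section
/- Let X ⊆ ∏_{i∈I} X_i (each X_i ⊆ ℝ) be convex and strongly order-bounded, and ≿ a complete, transitive, order dense, weakly monotonic binary relation on X. Then ≿ is separately continuous if and only if it satisfies restricted solvability. -/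
open Set

namespace Stmt12Aux

variable {I : Type*} [DecidableEq I]

lemma line_eq_update {X : Set (I → ℝ)} {i : I} {x p : I → ℝ}
    (hp : p ∈ LineSet X i x) : p = Function.update x i (p i) := by
  funext j
  by_cases hj : j = i
  · subst hj; simp
  · rw [Function.update_of_ne hj]
    exact hp.2 j hj

lemma update_lt_update {x : I → ℝ} {i : I} {s t : ℝ} (h : s < t) :
    Function.update x i s < Function.update x i t := by
  refine lt_iff_le_not_ge.mpr ⟨fun j => ?_, fun hle => ?_⟩
  · by_cases hj : j = i
    · subst hj; simpa using h.le
    · rw [Function.update_of_ne hj, Function.update_of_ne hj]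
  · have := hle i
    simp only [Function.update_self] at this
    exact absurd this (not_le.mpr h)

/-- If `z ≻ p` on a line, the set where `z` is strictly preferred is open. -/
lemma open_above {X : Set (I → ℝ)} {R : (I → ℝ) → (I → ℝ) → Prop}
    (hcomp : ∀ ⦃x⦄, x ∈ X → ∀ ⦃y⦄, y ∈ X → R x y ∨ R y x)
    (htrans : ∀ ⦃x⦄, x ∈ X → ∀ ⦃y⦄, y ∈ X → ∀ ⦃z⦄, z ∈ X → R x y → R y z → R x z)
    (hdense : ∀ ⦃x⦄, x ∈ X → ∀ ⦃y⦄, y ∈ X → StrictR R x y →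
      ∃ z ∈ X, StrictR R x z ∧ StrictR R z y)
    (hmono : ∀ ⦃x⦄, x ∈ X → ∀ ⦃y⦄, y ∈ X → y < x → R x y)
    (hsolv : ∀ ⦃x⦄, x ∈ X → ∀ (i : I) (y : I → ℝ) (a b : ℝ),
        Function.update y i a ∈ X → Function.update y i b ∈ X →
        R (Function.update y i a) x → R x (Function.update y i b) →
        ∃ c, Function.update y i c ∈ X ∧ IndiffR R x (Function.update y i c))
    (i : I) {x : I → ℝ} (hx : x ∈ X) {z : I → ℝ} (hz : z ∈ X) :
    IsOpen {p : LineSet X i x | StrictR R z p.1} := by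
  rw [isOpen_iff_mem_nhds]
  rintro ⟨p, hpmem⟩ hp
  simp only [mem_setOf_eq] at hp
  have hpX : p ∈ X := hpmem.1
  have hkey : ∃ c, p i < c ∧ ∀ q : I → ℝ, q ∈ LineSet X i x → q i < c → StrictR R z q := by
    have hwit : ∀ c', p i < c' → Function.update x i c' ∈ X →
        StrictR R z (Function.update x i c') →
        ∃ c, p i < c ∧ ∀ q : I → ℝ, q ∈ LineSet X i x → q i < c → StrictR R z q := by
      intro c' hc' hc'X hzc'
      refine ⟨c', hc', fun q hq hqc => ?_⟩
      have hqlt : q < Function.update x i c' := by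
        have := update_lt_update (x := x) (i := i) hqc
        rwa [← line_eq_update hq] at this
      have hRcq : R (Function.update x i c') q := hmono hc'X hq.1 hqlt
      exact ⟨htrans hz hc'X hq.1 hzc'.1 hRcq,
        fun hqz => hzc'.2 (htrans hc'X hq.1 hz hRcq hqz)⟩
    by_cases hA : ∃ s, p i < s ∧ Function.update x i s ∈ X
    · obtain ⟨s, hs, hsX⟩ := hA
      by_cases hzs : StrictR R z (Function.update x i s)
      · exact hwit s hs hsX hzs
      · have hRsz : R (Function.update x i s) z := by
          rcases hcomp hz hsX with h | h
          · by_contra hne; exact hzs ⟨h, hne⟩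
          · exact h
        obtain ⟨w, hwX, hzw, hwp⟩ := hdense hz hpX hp
        have hps : Function.update x i (p i) = p := (line_eq_update hpmem).symm
        have hpX' : Function.update x i (p i) ∈ X := by rw [hps]; exact hpX
        obtain ⟨c, hcX, hwc⟩ := hsolv hwX i x s (p i) hsX hpX'
          (htrans hsX hz hwX hRsz hzw.1) (by rw [hps]; exact hwp.1)
        have hcgt : p i < c := by
          by_contra hle
          push_neg at hle
          rcases eq_or_lt_of_le hle with he | hlt
          · rw [he, hps] at hwc
            exact hwp.2 hwc.2
          · have hlt2 : Function.update x i c < p := by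
              rw [← hps]; exact update_lt_update hlt
            have hRpc : R p (Function.update x i c) := hmono hpX hcX hlt2
            exact hwp.2 (htrans hpX hcX hwX hRpc hwc.2)
        exact hwit c hcgt hcX
          ⟨htrans hz hwX hcX hzw.1 hwc.1, fun h => hzw.2 (htrans hwX hcX hz hwc.1 h)⟩
    · push_neg at hA
      refine ⟨p i + 1, by linarith, fun q hq hqc => ?_⟩
      rcases lt_trichotomy (q i) (p i) with h | h | h
      · have hqlt : q < p := by
          have := update_lt_update (x := x) (i := i) h
          rwa [← line_eq_update hq, ← line_eq_update hpmem] at this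
        have hRpq : R p q := hmono hpX hq.1 hqlt
        exact ⟨htrans hz hpX hq.1 hp.1 hRpq,
          fun hqz => hp.2 (htrans hpX hq.1 hz hRpq hqz)⟩
      · have hqp : q = p := by
          rw [line_eq_update hq, h, ← line_eq_update hpmem]
        rw [hqp]; exact hp
      · exact absurd (by rw [← line_eq_update hq]; exact hq.1 :
          Function.update x i (q i) ∈ X) (hA (q i) h)
  obtain ⟨c, hc, hcall⟩ := hkey
  have hU : IsOpen {q : LineSet X i x | (q : I → ℝ) i < c} := by
    have hcont : Continuous fun q : LineSet X i x => (q : I → ℝ) i :=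
      (continuous_apply i).comp continuous_subtype_val
    exact isOpen_lt hcont continuous_const
  refine Filter.mem_of_superset (hU.mem_nhds hc) ?_
  rintro ⟨q, hq⟩ hqc
  exact hcall q hq hqc

/-- If `p ≻ z` on a line, the set where the point is strictly preferred to `z` is open. -/
lemma open_below {X : Set (I → ℝ)} {R : (I → ℝ) → (I → ℝ) → Prop}
    (hcomp : ∀ ⦃x⦄, x ∈ X → ∀ ⦃y⦄, y ∈ X → R x y ∨ R y x)
    (htrans : ∀ ⦃x⦄, x ∈ X → ∀ ⦃y⦄, y ∈ X → ∀ ⦃z⦄, z ∈ X → R x y → R y z → R x z)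
    (hdense : ∀ ⦃x⦄, x ∈ X → ∀ ⦃y⦄, y ∈ X → StrictR R x y →
      ∃ z ∈ X, StrictR R x z ∧ StrictR R z y)
    (hmono : ∀ ⦃x⦄, x ∈ X → ∀ ⦃y⦄, y ∈ X → y < x → R x y)
    (hsolv : ∀ ⦃x⦄, x ∈ X → ∀ (i : I) (y : I → ℝ) (a b : ℝ),
        Function.update y i a ∈ X → Function.update y i b ∈ X →
        R (Function.update y i a) x → R x (Function.update y i b) →
        ∃ c, Function.update y i c ∈ X ∧ IndiffR R x (Function.update y i c))
    (i : I) {x : I → ℝ} (hx : x ∈ X) {z : I → ℝ} (hz : z ∈ X) :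
    IsOpen {p : LineSet X i x | StrictR R p.1 z} := by
  rw [isOpen_iff_mem_nhds]
  rintro ⟨p, hpmem⟩ hp
  simp only [mem_setOf_eq] at hp
  have hpX : p ∈ X := hpmem.1
  have hkey : ∃ c, c < p i ∧ ∀ q : I → ℝ, q ∈ LineSet X i x → c < q i → StrictR R q z := by
    have hwit : ∀ c', c' < p i → Function.update x i c' ∈ X →
        StrictR R (Function.update x i c') z →
        ∃ c, c < p i ∧ ∀ q : I → ℝ, q ∈ LineSet X i x → c < q i → StrictR R q z := by
      intro c' hc' hc'X hc'z
      refine ⟨c', hc', fun q hq hqc => ?_⟩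
      have hqlt : Function.update x i c' < q := by
        have := update_lt_update (x := x) (i := i) hqc
        rwa [← line_eq_update hq] at this
      have hRqc : R q (Function.update x i c') := hmono hq.1 hc'X hqlt
      exact ⟨htrans hq.1 hc'X hz hRqc hc'z.1,
        fun hzq => hc'z.2 (htrans hz hq.1 hc'X hzq hRqc)⟩
    by_cases hA : ∃ s, s < p i ∧ Function.update x i s ∈ X
    · obtain ⟨s, hs, hsX⟩ := hA
      by_cases hzs : StrictR R (Function.update x i s) z
      · exact hwit s hs hsX hzs
      · have hRzs : R z (Function.update x i s) := by
          rcases hcomp hsX hz with h | h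
          · by_contra hne; exact hzs ⟨h, hne⟩
          · exact h
        obtain ⟨w, hwX, hpw, hwz⟩ := hdense hpX hz hp
        have hps : Function.update x i (p i) = p := (line_eq_update hpmem).symm
        have hpX' : Function.update x i (p i) ∈ X := by rw [hps]; exact hpX
        obtain ⟨c, hcX, hwc⟩ := hsolv hwX i x (p i) s hpX' hsX
          (by rw [hps]; exact hpw.1) (htrans hwX hz hsX hwz.1 hRzs)
        have hclt : c < p i := by
          by_contra hle
          push_neg at hle
          rcases eq_or_lt_of_le hle with he | hlt
          · rw [← he, hps] at hwc
            exact hpw.2 hwc.1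
          · have hlt2 : p < Function.update x i c := by
              rw [← hps]; exact update_lt_update hlt
            have hRcp : R (Function.update x i c) p := hmono hcX hpX hlt2
            exact hpw.2 (htrans hwX hcX hpX hwc.1 hRcp)
        exact hwit c hclt hcX
          ⟨htrans hcX hwX hz hwc.2 hwz.1, fun h => hwz.2 (htrans hz hcX hwX h hwc.2)⟩
    · push_neg at hA
      refine ⟨p i - 1, by linarith, fun q hq hqc => ?_⟩
      rcases lt_trichotomy (q i) (p i) with h | h | h
      · exact absurd (by rw [← line_eq_update hq]; exact hq.1 :
          Function.update x i (q i) ∈ X) (hA (q i) h)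
      · have hqp : q = p := by
          rw [line_eq_update hq, h, ← line_eq_update hpmem]
        rw [hqp]; exact hp
      · have hqlt : p < q := by
          have := update_lt_update (x := x) (i := i) h
          rwa [← line_eq_update hq, ← line_eq_update hpmem] at this
        have hRqp : R q p := hmono hq.1 hpX hqlt
        exact ⟨htrans hq.1 hpX hz hRqp hp.1,
          fun hzq => hp.2 (htrans hz hq.1 hpX hzq hRqp)⟩
  obtain ⟨c, hc, hcall⟩ := hkey
  have hU : IsOpen {q : LineSet X i x | c < (q : I → ℝ) i} := by
    have hcont : Continuous fun q : LineSet X i x => (q : I → ℝ) i :=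
      (continuous_apply i).comp continuous_subtype_val
    exact isOpen_lt continuous_const hcont
  refine Filter.mem_of_superset (hU.mem_nhds hc) ?_
  rintro ⟨q, hq⟩ hqc
  exact hcall q hq hqc

end Stmt12Aux

open Stmt12Aux in
theorem stmt12 {I : Type*} [DecidableEq I] (Xi : I → Set ℝ) (hXi : ∀ i, (Xi i).Nonempty)
    (X : Set (I → ℝ)) (hXsub : X ⊆ Set.pi Set.univ Xi) (hX : Convex ℝ X)
    (hsbdd : ∀ ⦃x⦄, x ∈ X → ∃ ε > (0:ℝ),
      (fun i => x i - ε) ∈ X ∧ (fun i => x i + ε) ∈ X)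
    (R : (I → ℝ) → (I → ℝ) → Prop)
    (hcomp : ∀ ⦃x⦄, x ∈ X → ∀ ⦃y⦄, y ∈ X → R x y ∨ R y x)
    (htrans : ∀ ⦃x⦄, x ∈ X → ∀ ⦃y⦄, y ∈ X → ∀ ⦃z⦄, z ∈ X → R x y → R y z → R x z)
    (hdense : ∀ ⦃x⦄, x ∈ X → ∀ ⦃y⦄, y ∈ X → StrictR R x y →
      ∃ z ∈ X, StrictR R x z ∧ StrictR R z y)
    (hmono : ∀ ⦃x⦄, x ∈ X → ∀ ⦃y⦄, y ∈ X → y < x → R x y) :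
    SepCont R X ↔
      (∀ ⦃x⦄, x ∈ X → ∀ (i : I) (y : I → ℝ) (a b : ℝ),
        Function.update y i a ∈ X → Function.update y i b ∈ X →
        R (Function.update y i a) x → R x (Function.update y i b) →
        ∃ c, Function.update y i c ∈ X ∧ IndiffR R x (Function.update y i c)) := by
  constructor
  · intro hSC x hxX i y a b haX hbX hax hxb
    set A := Function.update y i a with hA
    have haline : A ∈ LineSet X i A := ⟨haX, fun j hj => rfl⟩
    have hbline : Function.update y i b ∈ LineSet X i A :=
      ⟨hbX, fun j hj => by rw [Function.update_of_ne hj, hA, Function.update_of_ne hj]⟩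
    have hconv : Convex ℝ (LineSet X i A) := by
      intro u hu v hv s t hs ht hst
      refine ⟨hX hu.1 hv.1 hs ht hst, fun j hj => ?_⟩
      simp only [Pi.add_apply, Pi.smul_apply, smul_eq_mul]
      rw [hu.2 j hj, hv.2 j hj, ← add_mul, hst, one_mul]
    have hpc : PreconnectedSpace (LineSet X i A) :=
      Subtype.preconnectedSpace hconv.isPreconnected
    obtain ⟨hcl1, hcl2, -, -⟩ := hSC i haX hxX
    have hne := isPreconnected_closed_iff.mp
      (isPreconnected_univ (α := LineSet X i A))
      {p | R p.1 x} {p | R x p.1} hcl1 hcl2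
      (fun q _ => hcomp q.2.1 hxX)
      ⟨⟨A, haline⟩, mem_univ _, hax⟩
      ⟨⟨Function.update y i b, hbline⟩, mem_univ _, hxb⟩
    obtain ⟨p, -, hp1, hp2⟩ := hne
    have hpe : Function.update y i (p.1 i) = p.1 := by
      funext j
      by_cases hj : j = i
      · subst hj; simp
      · rw [Function.update_of_ne hj, p.2.2 j hj, hA, Function.update_of_ne hj]
    exact ⟨p.1 i, by rw [hpe]; exact p.2.1, by rw [hpe]; exact ⟨hp2, hp1⟩⟩
  · intro hsolv i x hxX z hzX
    have hopen1 := open_below hcomp htrans hdense hmono hsolv i hxX hzX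
    have hopen2 := open_above hcomp htrans hdense hmono hsolv i hxX hzX
    refine ⟨?_, ?_, hopen1, hopen2⟩
    · rw [← isOpen_compl_iff]
      have heq : {p : LineSet X i x | R p.1 z}ᶜ = {p : LineSet X i x | StrictR R z p.1} := by
        ext q
        simp only [mem_compl_iff, mem_setOf_eq, StrictR]
        exact ⟨fun h => ⟨(hcomp q.2.1 hzX).resolve_left h, h⟩, fun h => h.2⟩
      rw [heq]; exact hopen2
    · rw [← isOpen_compl_iff]
      have heq : {p : LineSet X i x | R z p.1}ᶜ = {p : LineSet X i x | StrictR R p.1 z} := by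
        ext q
        simp only [mem_compl_iff, mem_setOf_eq, StrictR]
        exact ⟨fun h => ⟨(hcomp hzX q.2.1).resolve_left h, h⟩, fun h => h.2⟩
      rw [heq]; exact hopen1
end
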